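/- arXiv:2312.06840 — 3 statements merged into one kernel-verified Lean document; each statement's English description precedes it below -/
import Mathlib

section
/- Let 𝓤 be a finite collection of pairwise disjoint closed disks in the plane, K a compact set disjoint from all of them, and for B ∈ 𝓤 let V_B = { z ∉ K : dist(z,B) < dist(z,B') for all B' ≠ B in 𝓤 }. If the closure of V_B is disjoint from K, then V_B is star-like with respect to the center of B: for every z ∈ V_B, the segment from the center of B to z lies in V_B. -/
open Metric

/-! Moving from `z` towards `c`, the distance to `B = closedBall c r` drops at unit speed
as long as we stay outside `B`, while the distance to any other set drops at most at unit speed;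
inside `B` it is `0`. Hence the Voronoi inequalities defining `V_B` persist along the segment.
The segment is connected and meets `closure V_B` (at `c`), so it cannot meet the closed set `K`,
which is disjoint from `closure V_B`. -/

section

variable {E : Type*} [NormedAddCommGroup E] [NormedSpace ℝ E]

theorem infDist_closedBall_of_le {x c : E} {r : ℝ} (hr : 0 ≤ r) (h : r ≤ dist x c) :
    infDist x (closedBall c r) = dist x c - r := by
  refine le_antisymm ?_ ((le_infDist (nonempty_closedBall.2 hr)).2 fun y hy => ?_)
  · set p := AffineMap.lineMap c x (r / dist x c)
    have hratio : r / dist x c * dist x c = r := div_mul_cancel_of_imp fun h0 => by linarith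
    have hle : r / dist x c ≤ 1 := div_le_one_of_le₀ h dist_nonneg
    have hpc : dist p c = r := by
      rw [dist_lineMap_left, Real.norm_of_nonneg (div_nonneg hr dist_nonneg), dist_comm c x, hratio]
    calc infDist x (closedBall c r) ≤ dist x p := infDist_le_dist_of_mem hpc.le
      _ = dist x c - r := by
        rw [dist_comm x p, dist_lineMap_right, Real.norm_of_nonneg (by linarith), dist_comm c x, sub_mul,
          one_mul, hratio]
  · linarith [dist_triangle x y c, mem_closedBall.1 hy]

theorem infDist_closedBall_lt_of_mem_segment {c z w : E} {r : ℝ} {C : Set E} (hr : 0 ≤ r)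
    (hC : IsClosed C) (hdisj : Disjoint (closedBall c r) C)
    (hz : infDist z (closedBall c r) < infDist z C) (hw : w ∈ segment ℝ c z) :
    infDist w (closedBall c r) < infDist w C := by
  by_cases hwB : w ∈ closedBall c r
  · have hCne : C.Nonempty := Set.nonempty_iff_ne_empty.2 fun hCe => by
      rw [hCe, infDist_empty] at hz
      exact hz.not_ge infDist_nonneg
    rw [infDist_zero_of_mem hwB]
    exact (hC.notMem_iff_infDist_pos hCne).1 (Set.disjoint_left.1 hdisj hwB)
  · have hwc : r < dist w c := lt_of_not_ge hwB
    have hcwz := dist_add_dist_of_mem_segment hw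
    rw [dist_comm c w, dist_comm c z] at hcwz
    calc infDist w (closedBall c r) = dist w c - r := infDist_closedBall_of_le hr hwc.le
      _ = infDist z (closedBall c r) - dist z w := by
        rw [infDist_closedBall_of_le hr (by linarith [dist_nonneg (x := w) (y := z)]),
          dist_comm z w]
        linarith
      _ < infDist z C - dist z w := by linarith
      _ ≤ infDist w C := by linarith [infDist_le_infDist_add_dist (x := z) (y := w) (s := C)]

end

theorem IsPreconnected.disjoint_of_diff_subset {X : Type*} [TopologicalSpace X] {s V K : Set X}
    (hs : IsPreconnected s) (hK : IsClosed K) (hVK : Disjoint (closure V) K) (hsV : s \ K ⊆ V)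
    (hne : (s \ K).Nonempty) : Disjoint s K := by
  rw [Set.disjoint_iff_inter_eq_empty, ← Set.not_nonempty_iff_eq_empty]
  intro hsK
  obtain ⟨x, hxs, hxV, hxK⟩ := isPreconnected_closed_iff.1 hs _ _ isClosed_closure hK
    (fun x hx => or_iff_not_imp_right.2 fun hxK => subset_closure (hsV ⟨hx, hxK⟩))
    (hne.mono fun x hx => ⟨hx.1, subset_closure (hsV hx)⟩) hsK
  exact Set.disjoint_left.1 hVK hxV hxK

theorem stmt5_general {ι : Type*} (c : ι → ℂ) (r : ι → ℝ)
    (hr : ∀ i, 0 ≤ r i)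
    (hdisj : Pairwise (Function.onFun Disjoint fun i => closedBall (c i) (r i)))
    (K : Set ℂ) (hK : IsCompact K)
    (hKdisj : ∀ i, Disjoint K (closedBall (c i) (r i)))
    (V : ι → Set ℂ)
    (hV : ∀ i, V i = {z : ℂ | z ∉ K ∧ ∀ j, j ≠ i →
      infDist z (closedBall (c i) (r i)) < infDist z (closedBall (c j) (r j))})
    (i : ι) (hcl : Disjoint (closure (V i)) K) :
    ∀ z ∈ V i, segment ℝ (c i) z ⊆ V i := by
  obtain rfl : V = _ := funext hV
  rintro z ⟨-, hz⟩
  have hvoronoi : ∀ w ∈ segment ℝ (c i) z, ∀ j, j ≠ i →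
      infDist w (closedBall (c i) (r i)) < infDist w (closedBall (c j) (r j)) :=
    fun w hw j hj => infDist_closedBall_lt_of_mem_segment (hr i) isClosed_closedBall
      (hdisj hj.symm) (hz j hj) hw
  have hcK : c i ∉ K := fun hc => Set.disjoint_left.1 (hKdisj i) hc (mem_closedBall_self (hr i))
  have hsegK : Disjoint (segment ℝ (c i) z) K :=
    (convex_segment _ _).isPreconnected.disjoint_of_diff_subset hK.isClosed hcl
      (fun w hw => ⟨hw.2, hvoronoi w hw.1⟩) ⟨c i, left_mem_segment ℝ _ _, hcK⟩
  exact fun w hw => ⟨Set.disjoint_left.1 hsegK hw, hvoronoi w hw⟩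

/-- If the closure of a Voronoi cell `V_B` avoids `K`, then `V_B` is star-like with
respect to the center of `B`. -/
theorem stmt5 {ι : Type*} [Fintype ι] [Nonempty ι] (c : ι → ℂ) (r : ι → ℝ)
    (hr : ∀ i, 0 ≤ r i)
    (hdisj : Pairwise (Function.onFun Disjoint fun i => closedBall (c i) (r i)))
    (K : Set ℂ) (hK : IsCompact K)
    (hKdisj : ∀ i, Disjoint K (closedBall (c i) (r i)))
    (V : ι → Set ℂ)
    (hV : ∀ i, V i = {z : ℂ | z ∉ K ∧ ∀ j, j ≠ i →
      infDist z (closedBall (c i) (r i)) < infDist z (closedBall (c j) (r j))})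
    (i : ι) (hcl : Disjoint (closure (V i)) K) :
    ∀ z ∈ V i, segment ℝ (c i) z ⊆ V i :=
  stmt5_general c r hr hdisj K hK hKdisj V hV i hcl
end

section
/- Let V ⊆ ℂ be a bounded open set that is star-like with respect to a point z_0 ∈ V. Then ℂ \ V̄ is connected, and consequently ℂ \ ∂V has exactly two connected components, namely V and ℂ \ V̄. -/
/-!
A point outside a star-like set stays outside it when pushed radially away from the centre,
and the closure of a star-like set is star-like. Two points of `ℂ \ V̄` can therefore be pushed
out to one circle of large radius, which misses the bounded set `V̄` and is path connected.
Since `V` is open, `∂V = V̄ \ V`, which gives the decomposition of `ℂ \ ∂V`.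
-/

open Metric

protected theorem StarConvex.closure {𝕜 E : Type*} [Semiring 𝕜] [PartialOrder 𝕜]
    [AddCommMonoid E] [Module 𝕜 E] [TopologicalSpace E] [ContinuousAdd E]
    [ContinuousConstSMul 𝕜 E] {x : E} {s : Set E} (hs : StarConvex 𝕜 x s) :
    StarConvex 𝕜 x (closure s) := fun _ hy a b ha hb hab =>
  map_mem_closure (f := fun y => a • x + b • y) (continuous_const.add (continuous_const_smul b))
    hy fun _ hy' => hs hy' ha hb hab

section Ray

variable {E : Type*} [AddCommGroup E] [Module ℝ E] {x z : E} {C : Set E}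

theorem StarConvex.add_smul_sub_notMem (hC : StarConvex ℝ x C) (hz : z ∉ C) {t : ℝ}
    (ht : 1 ≤ t) : x + t • (z - x) ∉ C := by
  intro h
  have ht0 : 0 < t := one_pos.trans_le ht
  refine hz ?_
  convert hC h (sub_nonneg.2 (inv_le_one_of_one_le₀ ht)) (inv_nonneg.2 ht0.le)
    (sub_add_cancel 1 t⁻¹) using 1
  rw [smul_add, smul_smul, inv_mul_cancel₀ ht0.ne']
  module

theorem StarConvex.joinedIn_compl_add_smul_sub [TopologicalSpace E] [IsTopologicalAddGroup E]
    [ContinuousSMul ℝ E] (hC : StarConvex ℝ x C) (hz : z ∉ C) {t : ℝ} (ht : 1 ≤ t) :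
    JoinedIn Cᶜ z (x + t • (z - x)) := by
  refine JoinedIn.of_segment_subset ?_
  rintro _ ⟨a, b, ha, hb, hab, rfl⟩
  have hcomb : a • z + b • (x + t • (z - x)) = x + (a + b * t) • (z - x) := by
    obtain rfl : a = 1 - b := by linarith
    module
  rw [hcomb]
  exact hC.add_smul_sub_notMem hz (by nlinarith)

end Ray

section NormedSpace

variable {E : Type*} [NormedAddCommGroup E] [NormedSpace ℝ E] {x : E} {C : Set E}

theorem StarConvex.exists_mem_sphere_joinedIn_compl (hC : StarConvex ℝ x C) (hx : x ∈ C)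
    {y : E} (hy : y ∉ C) {r : ℝ} (hr : ‖y - x‖ ≤ r) :
    ∃ p ∈ sphere x r, JoinedIn Cᶜ y p := by
  have hyx : 0 < ‖y - x‖ := norm_pos_iff.2 (sub_ne_zero.2 fun h => hy (h ▸ hx))
  refine ⟨x + (r / ‖y - x‖) • (y - x), ?_,
    hC.joinedIn_compl_add_smul_sub hy ((one_le_div hyx).2 hr)⟩
  rw [mem_sphere_iff_norm, add_sub_cancel_left, norm_smul, Real.norm_of_nonneg
    (div_nonneg (hyx.le.trans hr) hyx.le), div_mul_cancel₀ _ hyx.ne']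

theorem Bornology.IsBounded.isPathConnected_compl_of_starConvex
    (hE : 1 < Module.rank ℝ E) (hb : Bornology.IsBounded C) (hC : StarConvex ℝ x C) :
    IsPathConnected Cᶜ := by
  rcases C.eq_empty_or_nonempty with rfl | hne
  · simpa using isPathConnected_univ
  have hx : x ∈ C := hC.mem hne
  obtain ⟨R, hR⟩ := hb.subset_closedBall x
  have hR0 : 0 ≤ R := by simpa using hR hx
  have sphere_subset : ∀ r, R < r → sphere x r ⊆ Cᶜ := fun r hr p hp hpC =>
    (mem_closedBall.1 (hR hpC)).not_gt (mem_sphere.1 hp ▸ hr)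
  have sphere_pathConnected : ∀ r, R < r → IsPathConnected (sphere x r) := fun r hr =>
    isPathConnected_sphere hE x (hR0.trans hr.le)
  refine isPathConnected_iff.2 ⟨(sphere_pathConnected _ (lt_add_one R)).nonempty.mono
    (sphere_subset _ (lt_add_one R)), fun y hy y' hy' => ?_⟩
  set r := max (R + 1) (max ‖y - x‖ ‖y' - x‖)
  have hRr : R < r := (lt_add_one R).trans_le (le_max_left _ _)
  obtain ⟨p, hp, hyp⟩ := hC.exists_mem_sphere_joinedIn_compl hx hy
    ((le_max_left _ _).trans (le_max_right _ _) : ‖y - x‖ ≤ r)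
  obtain ⟨q, hq, hyq⟩ := hC.exists_mem_sphere_joinedIn_compl hx hy'
    ((le_max_right _ _).trans (le_max_right _ _) : ‖y' - x‖ ≤ r)
  have hpq : JoinedIn Cᶜ p q :=
    ((sphere_pathConnected r hRr).joinedIn p hp q hq).mono (sphere_subset r hRr)
  exact (hyp.trans hpq).trans hyq.symm

end NormedSpace

/-- For a bounded open set `V ⊆ ℂ` that is star-like with respect to `z₀ ∈ V`, the
complement of the closure of `V` is connected, and `ℂ \ ∂V` has exactly two connected
components, namely `V` and `ℂ \ V̄`. -/
theorem stmt10 (V : Set ℂ) (hV : IsOpen V) (hb : Bornology.IsBounded V)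
    (z₀ : ℂ) (hz₀ : z₀ ∈ V)
    (hstar : ∀ z ∈ V, segment ℝ z₀ z ⊆ V) :
    IsConnected (closure V)ᶜ ∧ IsConnected V ∧
      (frontier V)ᶜ = V ∪ (closure V)ᶜ ∧ Disjoint V (closure V)ᶜ := by
  have hs : StarConvex ℝ z₀ V := starConvex_iff_segment_subset.2 hstar
  have hrank : 1 < Module.rank ℝ ℂ := by simp [Complex.rank_real_complex]
  refine ⟨(hb.closure.isPathConnected_compl_of_starConvex hrank hs.closure).isConnected,
    (hs.isPathConnected hz₀).isConnected, ?_,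
    Set.disjoint_compl_right_iff_subset.2 subset_closure⟩
  rw [hV.frontier_eq, Set.sdiff_eq, Set.compl_inter, compl_compl, Set.union_comm]
end

section
/- Let (π_k)_{k∈ℕ} be homeomorphisms of the Riemann sphere converging uniformly to a continuous surjection π : Ĉ → Ĉ, and suppose there exists η > 0 such that: for every compact A ⊆ ℂ with diam A ≤ η, diam π^{-1}(A) < ε. Then there exists k₁ ∈ ℕ such that for all k ≥ k₁ and every compact A with diam A ≤ η, diam π_k^{-1}(A) < ε. -/
open Metric Filter Set

/-!
Reformulate the hypothesis pointwise: `dist (π x) (π y) ≤ η` forces `dist x y < ε`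
(take `A = {π x, π y}`). By compactness of the pairs with `dist x y ≥ ε`, this survives
enlarging `η` to some `η' > η`, and a uniform `(η' - η) / 2`-perturbation of `π` then keeps
the pointwise property at level `η`. Back from points to diameters, the preimage of a compact
set under the continuous `π_k` is compact, so its diameter is attained and stays below `ε`.
-/

theorem IsCompact.diam_lt {X : Type*} [PseudoMetricSpace X] {s : Set X} {ε : ℝ}
    (hs : IsCompact s) (hε : 0 < ε) (h : ∀ x ∈ s, ∀ y ∈ s, dist x y < ε) : diam s < ε := by
  rcases s.eq_empty_or_nonempty with rfl | hne
  · simpa using hε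
  obtain ⟨p, hp, hmax⟩ := (hs.prod hs).exists_isMaxOn (hne.prod hne)
    (continuous_dist.continuousOn (s := s ×ˢ s))
  calc diam s ≤ dist p.1 p.2 :=
        diam_le_of_forall_dist_le_of_nonempty hne fun x hx y hy => hmax (mk_mem_prod hx hy)
    _ < ε := h _ hp.1 _ hp.2

section

variable {X Y : Type*} [PseudoMetricSpace X] [PseudoMetricSpace Y] {f : X → Y} {ε η : ℝ}

theorem dist_lt_of_forall_diam_preimage_lt [BoundedSpace X]
    (h : ∀ A : Set Y, IsCompact A → diam A ≤ η → diam (f ⁻¹' A) < ε) {x y : X}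
    (hxy : dist (f x) (f y) ≤ η) : dist x y < ε := by
  have hA : IsCompact ({f x, f y} : Set Y) := (toFinite _).isCompact
  calc dist x y ≤ diam (f ⁻¹' {f x, f y}) :=
        dist_le_diam_of_mem (Bornology.IsBounded.all _) (by simp) (by simp)
    _ < ε := h _ hA (by rwa [diam_pair])

theorem exists_gt_forall_dist_lt_of_dist_le [CompactSpace X] (hf : Continuous f)
    (h : ∀ x y, dist (f x) (f y) ≤ η → dist x y < ε) :
    ∃ η' > η, ∀ x y, dist (f x) (f y) < η' → dist x y < ε := by
  have hfar : IsCompact {p : X × X | ε ≤ dist p.1 p.2} :=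
    (isClosed_le continuous_const continuous_dist).isCompact
  obtain ⟨η', hηη', hη'⟩ := hfar.exists_forall_le'
    (f := fun p => dist (f p.1) (f p.2)) (by fun_prop)
    fun p hp => lt_of_not_ge fun hle => (h _ _ hle).not_ge hp
  exact ⟨η', hηη', fun x y hxy => lt_of_not_ge fun hle => (hη' (x, y) hle).not_gt hxy⟩

theorem TendstoUniformly.eventually_forall_dist_lt_of_dist_le {ι : Type*} {F : ι → X → Y}
    {p : Filter ι} (hF : TendstoUniformly F f p) {η' : ℝ} (hηη' : η < η')
    (h : ∀ x y, dist (f x) (f y) < η' → dist x y < ε) :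
    ∀ᶠ n in p, ∀ x y, dist (F n x) (F n y) ≤ η → dist x y < ε := by
  filter_upwards [Metric.tendstoUniformly_iff.1 hF ((η' - η) / 2) (by linarith)] with n hn x y hxy
  refine h x y ?_
  calc dist (f x) (f y) ≤ dist (f x) (F n x) + dist (F n x) (F n y) + dist (F n y) (f y) :=
        dist_triangle4 _ _ _ _
    _ < η' := by linarith [hn x, hn y, dist_comm (F n y) (f y)]

end

theorem diam_preimage_lt_of_forall_dist_lt {X Y : Type*} [PseudoMetricSpace X] [CompactSpace X]
    [MetricSpace Y] {f : X → Y} {ε η : ℝ} (hε : 0 < ε) (hf : Continuous f)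
    (h : ∀ x y, dist (f x) (f y) ≤ η → dist x y < ε) {A : Set Y} (hA : IsCompact A)
    (hAη : diam A ≤ η) : diam (f ⁻¹' A) < ε :=
  (hA.isClosed.preimage hf).isCompact.diam_lt hε fun x hx y hy =>
    h x y ((dist_le_diam_of_mem hA.isBounded hx hy).trans hAη)

theorem stmt18_general (ε η : ℝ) (hε : 0 < ε)
    (πk : ℕ → ↥(Metric.sphere (0 : EuclideanSpace ℝ (Fin 3)) 1) ≃ₜ
      ↥(Metric.sphere (0 : EuclideanSpace ℝ (Fin 3)) 1))
    (π : ↥(Metric.sphere (0 : EuclideanSpace ℝ (Fin 3)) 1) →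
      ↥(Metric.sphere (0 : EuclideanSpace ℝ (Fin 3)) 1))
    (hπc : Continuous π)
    (hconv : TendstoUniformly (fun k => ⇑(πk k)) π atTop)
    (hη' : ∀ A : Set ↥(Metric.sphere (0 : EuclideanSpace ℝ (Fin 3)) 1),
      IsCompact A → diam A ≤ η → diam (π ⁻¹' A) < ε) :
    ∃ k₁ : ℕ, ∀ k ≥ k₁, ∀ A : Set ↥(Metric.sphere (0 : EuclideanSpace ℝ (Fin 3)) 1),
      IsCompact A → diam A ≤ η → diam (⇑(πk k) ⁻¹' A) < ε := by
  obtain ⟨η', hηη', hgap⟩ := exists_gt_forall_dist_lt_of_dist_le hπc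
    fun x y hxy => dist_lt_of_forall_diam_preimage_lt hη' hxy
  obtain ⟨k₁, hk₁⟩ := eventually_atTop.1 (hconv.eventually_forall_dist_lt_of_dist_le hηη' hgap)
  exact ⟨k₁, fun k hk A hA hAη =>
    diam_preimage_lt_of_forall_dist_lt hε (πk k).continuous (hk₁ k hk) hA hAη⟩

/-- Equicontinuity of inverses: if homeomorphisms `π_k` of the sphere converge
uniformly to a continuous surjection `π`, and `π`-preimages of compact sets of
diameter at most `η` have diameter less than `ε`, then the same holds for `π_k`
for all sufficiently large `k`. -/
theorem stmt18 (ε η : ℝ) (hε : 0 < ε) (hη : 0 < η)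
    (πk : ℕ → ↥(Metric.sphere (0 : EuclideanSpace ℝ (Fin 3)) 1) ≃ₜ
      ↥(Metric.sphere (0 : EuclideanSpace ℝ (Fin 3)) 1))
    (π : ↥(Metric.sphere (0 : EuclideanSpace ℝ (Fin 3)) 1) →
      ↥(Metric.sphere (0 : EuclideanSpace ℝ (Fin 3)) 1))
    (hπc : Continuous π) (hπs : Function.Surjective π)
    (hconv : TendstoUniformly (fun k => ⇑(πk k)) π atTop)
    (hη' : ∀ A : Set ↥(Metric.sphere (0 : EuclideanSpace ℝ (Fin 3)) 1),
      IsCompact A → diam A ≤ η → diam (π ⁻¹' A) < ε) :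
    ∃ k₁ : ℕ, ∀ k ≥ k₁, ∀ A : Set ↥(Metric.sphere (0 : EuclideanSpace ℝ (Fin 3)) 1),
      IsCompact A → diam A ≤ η → diam (⇑(πk k) ⁻¹' A) < ε :=
  stmt18_general ε η hε πk π hπc hconv hη'
end
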